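/- Let X be a simplicial complex, let σ = {v_1, …, v_k} ∈ X be a face with k distinct vertices, and for 0 ≤ i ≤ k let σ_i = {v_j : 1 ≤ j ≤ i}. Let d ≥ k. If C(lk(X \ v_{i+1}, σ_i)) ≤ d − i for all 0 ≤ i ≤ k − 1, and C(lk(X, σ_k)) ≤ d − k, then C(X) ≤ d. -/

import Mathlib

/-!
Write `σ_i = {v j : j < i}`. We show by downward induction on `i` that `lk(X, σ_i)` is
`(d - i)`-collapsible; the case `i = 0` is the theorem. The step applies, to `Y = lk(X, σ_i)`
and `u = v i`, the fact that `Y` is `(d + 1)`-collapsible as soon as `Y \ u` is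
`(d + 1)`-collapsible and `lk(Y, u)` is `d`-collapsible: `Y` is the union of `Y \ u` and the
cone `u ∗ lk(Y, u)`, and each elementary `d`-collapse of the link, applied to the cone, is an
elementary `(d + 1)`-collapse of the union, so the link collapses away leaving `Y \ u`.
Here `lk(Y, u) = lk(X, σ_{i+1})` and `Y \ u = lk(X \ v i, σ_i)`.
-/

namespace PaperKL

open Finset

variable {V : Type*}

section Complexes
variable [DecidableEq V]

/-- A (finite) abstract simplicial complex: a family of finite sets closed under
taking subsets. -/
def IsSimplicialComplex (X : Finset (Finset V)) : Prop :=
  ∀ σ ∈ X, ∀ τ ⊆ σ, τ ∈ X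

/-- `σ` is a free face of `X`, with `τ` the unique maximal face of `X` containing it:
equivalently, every face of `X` containing `σ` is contained in `τ`. -/
def IsFreeFace (X : Finset (Finset V)) (σ τ : Finset V) : Prop :=
  σ ∈ X ∧ τ ∈ X ∧ σ ⊆ τ ∧ ∀ η ∈ X, σ ⊆ η → η ⊆ τ

/-- `Y` is obtained from `X` by an elementary `d`-collapse. -/
def ElemCollapse (d : ℕ) (X Y : Finset (Finset V)) : Prop :=
  ∃ σ τ : Finset V, IsFreeFace X σ τ ∧ σ.card ≤ d ∧
    Y = X.filter fun η => ¬(σ ⊆ η ∧ η ⊆ τ)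

/-- `X` is `d`-collapsible: some sequence of elementary `d`-collapses reduces `X`
to the void complex `∅`. -/
def Collapsible (d : ℕ) (X : Finset (Finset V)) : Prop :=
  Relation.ReflTransGen (ElemCollapse d) X ∅

/-- The collapsibility number `C(X)`: the minimum `d` such that `X` is `d`-collapsible. -/
noncomputable def collapseNum (X : Finset (Finset V)) : ℕ :=
  sInf {d | Collapsible d X}

/-- The link `lk(X, τ) = {η ∈ X : η ∩ τ = ∅, η ∪ τ ∈ X}`. -/
def link (X : Finset (Finset V)) (τ : Finset V) : Finset (Finset V) :=
  X.filter fun η => η ∩ τ = ∅ ∧ η ∪ τ ∈ X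

/-- Deletion of a vertex: `X \ v`. -/
def deleteVert (X : Finset (Finset V)) (v : V) : Finset (Finset V) :=
  X.filter fun σ => v ∉ σ

/-- The induced subcomplex on the complement of `S`: `X[V \ S]`. -/
def deleteSet (X : Finset (Finset V)) (S : Finset V) : Finset (Finset V) :=
  X.filter fun σ => σ ∩ S = ∅

/-- The vertex set of a complex: the union of its faces. -/
def vertexSet (X : Finset (Finset V)) : Finset V := X.sup id

/-- The join `X ∗ Y = {σ ∪ τ : σ ∈ X, τ ∈ Y}`. -/
def joinSC (X Y : Finset (Finset V)) : Finset (Finset V) :=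
  (X ×ˢ Y).image fun p => p.1 ∪ p.2

/-- `τ` is a maximal face of `X`. -/
def IsMaximalFace (X : Finset (Finset V)) (τ : Finset V) : Prop :=
  τ ∈ X ∧ ∀ η ∈ X, τ ⊆ η → η = τ

/-- `X` is a cone over `v`: every maximal face of `X` contains `v`. -/
def IsConeOver (X : Finset (Finset V)) (v : V) : Prop :=
  ∀ τ, IsMaximalFace X τ → v ∈ τ

/-- A missing face of `X`: a subset of the vertex set which is not a face,
all of whose proper subsets are faces. -/
def IsMissingFace (X : Finset (Finset V)) (τ : Finset V) : Prop :=
  τ ⊆ vertexSet X ∧ τ ∉ X ∧ ∀ σ ⊂ τ, σ ∈ X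

end Complexes

/-- A finset is an independent set in the graph `G`. -/
def IsIndepSet (G : SimpleGraph V) (s : Finset V) : Prop :=
  ∀ u ∈ s, ∀ v ∈ s, ¬ G.Adj u v

section Graphs
variable [DecidableEq V]

/-- The complex `I_n(G[W])` of the induced subgraph `G[W]`, realized as the family of
subsets `U ⊆ W` such that `U` contains no independent set of `G` of size `n`. -/
noncomputable def indComplexOn (G : SimpleGraph V) (W : Finset V) (n : ℕ) :
    Finset (Finset V) :=
  @Finset.filter _ (fun U => ¬ ∃ I ⊆ U, I.card = n ∧ IsIndepSet G I)
    (Classical.decPred _) W.powerset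

variable [Fintype V]

/-- The complex `I_n(G)`: subsets of `V` containing no independent set of size `n`. -/
noncomputable def indComplex (G : SimpleGraph V) (n : ℕ) : Finset (Finset V) :=
  indComplexOn G Finset.univ n

/-- The open neighborhood of `v` as a finset. -/
noncomputable def nbrsFinset (G : SimpleGraph V) (v : V) : Finset V :=
  @Finset.filter _ (fun u => G.Adj v u) (Classical.decPred _) Finset.univ

/-- Filter of a finset by an arbitrary predicate (classical decidability). -/
noncomputable def cfilter (p : V → Prop) (s : Finset V) : Finset V :=
  @Finset.filter _ p (Classical.decPred _) s

end Graphs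

/-- `G` has maximum degree at most `Δ`. -/
def MaxDegLE (G : SimpleGraph V) (Δ : ℕ) : Prop :=
  ∀ v : V, (G.neighborSet v).ncard ≤ Δ

/-- `G` is claw-free: it has no induced subgraph isomorphic to `K_{1,3}`. -/
def ClawFree (G : SimpleGraph V) : Prop :=
  ¬ ∃ a b c d : V, b ≠ c ∧ b ≠ d ∧ c ≠ d ∧
    G.Adj a b ∧ G.Adj a c ∧ G.Adj a d ∧ ¬G.Adj b c ∧ ¬G.Adj b d ∧ ¬G.Adj c d

/-- `G` is chordal: it has no induced cycle of length at least 4. -/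
def IsChordal (G : SimpleGraph V) : Prop :=
  ∀ m : ℕ, 4 ≤ m → ¬ ∃ f : ZMod m → V, Function.Injective f ∧
    ∀ i j : ZMod m, G.Adj (f i) (f j) ↔ (j = i + 1 ∨ i = j + 1)

/-- `v` is a simplicial vertex of `G`: its closed neighborhood is a clique. -/
def IsSimplicialVertex (G : SimpleGraph V) (v : V) : Prop :=
  ∀ a b : V, G.Adj v a → G.Adj v b → a ≠ b → G.Adj a b

/-- The connected component of `v` in `G` is a path: its vertices can be enumerated
as `f 0, …, f m` with adjacency exactly between consecutive vertices. -/
def InPathComponent (G : SimpleGraph V) (v : V) : Prop :=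
  ∃ (m : ℕ) (f : Fin (m + 1) → V), Function.Injective f ∧
    (∀ w, G.Reachable v w ↔ ∃ i, f i = w) ∧
    (∀ i j : Fin (m + 1), G.Adj (f i) (f j) ↔ ((i : ℕ) + 1 = (j : ℕ) ∨ (j : ℕ) + 1 = (i : ℕ)))

/-- The collection `A 0, …, A (t-1)` of independent sets of `G` admits a rainbow
independent set of size `n`: there are indices `g 0 < ⋯ < g (n-1)` and distinct
vertices `a j ∈ A (g j)` forming an independent set of `G`. -/
def HasRainbowIndepSet [DecidableEq V] (G : SimpleGraph V) (n : ℕ) {t : ℕ} (A : Fin t → Finset V) : Prop :=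
  ∃ (g : Fin n → Fin t) (a : Fin n → V), StrictMono g ∧ Function.Injective a ∧
    (∀ j, a j ∈ A (g j)) ∧ IsIndepSet G (Finset.image a Finset.univ)

section FGraphs
variable [DecidableEq V] [Fintype V]

/-- `f_G(n)`: the minimum `t` such that every collection of `t` independent sets of
size `n` in `G` has a rainbow independent set of size `n`. -/
noncomputable def fRainbow (G : SimpleGraph V) (n : ℕ) : ℕ :=
  sInf {t | ∀ A : Fin t → Finset V,
    (∀ i, IsIndepSet G (A i) ∧ (A i).card = n) → HasRainbowIndepSet G n A}

/-- The independence number `α(G)`. -/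
noncomputable def indepNum (G : SimpleGraph V) : ℕ :=
  (@Finset.filter _ (fun s => IsIndepSet G s) (Classical.decPred _)
    (Finset.univ : Finset V).powerset).sup Finset.card

end FGraphs

section Collapsibility
variable [DecidableEq V] {X : Finset (Finset V)}

theorem IsSimplicialComplex.link (hX : IsSimplicialComplex X) (s : Finset V) :
    IsSimplicialComplex (link X s) := by
  intro σ hσ τ hτ
  simp only [PaperKL.link, mem_filter, ← disjoint_iff_inter_eq_empty] at hσ ⊢
  exact ⟨hX σ hσ.1 τ hτ, hσ.2.1.mono_left hτ, hX _ hσ.2.2 _ (union_subset_union_left hτ)⟩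

theorem link_empty (X : Finset (Finset V)) : link X ∅ = X :=
  filter_true_of_mem fun η hη => by simpa using hη

theorem link_link (hX : IsSimplicialComplex X) {s t : Finset V} (hst : Disjoint s t) :
    link (link X s) t = link X (s ∪ t) := by
  ext η
  simp only [link, mem_filter, ← disjoint_iff_inter_eq_empty, disjoint_union_right,
    union_assoc, union_comm t s]
  constructor
  · rintro ⟨⟨hη, hηs, -⟩, hηt, -, -, hηts⟩
    exact ⟨hη, ⟨hηs, hηt⟩, hηts⟩
  · rintro ⟨hη, ⟨hηs, hηt⟩, hηst⟩
    have hηt_mem : η ∪ t ∈ X := hX _ hηst _ (union_subset_union_right subset_union_right)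
    exact ⟨⟨hη, hηs, hX _ hηst _ (union_subset_union_right subset_union_left)⟩, hηt, hηt_mem,
      disjoint_union_left.2 ⟨hηs, hst.symm⟩, hηst⟩

theorem deleteVert_link {s : Finset V} {w : V} (hw : w ∉ s) :
    deleteVert (link X s) w = link (deleteVert X w) s := by
  ext η
  simp only [deleteVert, link, mem_filter, mem_union]
  constructor
  · rintro ⟨⟨hη, hηs, hηs_mem⟩, hwη⟩
    exact ⟨⟨hη, hwη⟩, hηs, hηs_mem, fun h => h.elim hwη hw⟩
  · rintro ⟨⟨hη, hwη⟩, hηs, hηs_mem, -⟩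
    exact ⟨⟨hη, hηs, hηs_mem⟩, hwη⟩

theorem Collapsible.mono {d d' : ℕ} (h : d ≤ d') (hc : Collapsible d X) :
    Collapsible d' X :=
  Relation.ReflTransGen.mono
    (fun _ _ ⟨σ, τ, hf, hcard, hY⟩ => ⟨σ, τ, hf, hcard.trans h, hY⟩) _ _ hc

theorem elemCollapse_erase_of_isMaximalFace {d : ℕ} {τ : Finset V} (hτ : IsMaximalFace X τ)
    (hd : τ.card ≤ d) : ElemCollapse d X (X.erase τ) := by
  refine ⟨τ, τ, ⟨hτ.1, hτ.1, subset_rfl, fun η hη hτη => (hτ.2 η hη hτη).le⟩, hd, ?_⟩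
  simp only [← subset_antisymm_iff, eq_comm (a := τ)]
  exact (filter_ne' X τ).symm

theorem collapsible_of_card_le {d : ℕ} (hd : ∀ σ ∈ X, σ.card ≤ d) : Collapsible d X := by
  induction X using strongInduction with
  | H X ih =>
    obtain rfl | hne := X.eq_empty_or_nonempty
    · exact .refl
    obtain ⟨τ, hτ⟩ := exists_maximal hne
    have hτ' : IsMaximalFace X τ := ⟨hτ.1, fun η hη hτη => hτ.eq_of_ge hη hτη ▸ rfl⟩
    exact .head (elemCollapse_erase_of_isMaximalFace hτ' (hd τ hτ.1))
      (ih _ (erase_ssubset hτ.1) fun σ hσ => hd σ (mem_of_mem_erase hσ))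

theorem collapseNum_le_iff {d : ℕ} : collapseNum X ≤ d ↔ Collapsible d X := by
  refine ⟨fun h => Collapsible.mono h ?_, fun h => Nat.sInf_le h⟩
  exact Nat.sInf_mem (s := {d | Collapsible d X})
    ⟨_, collapsible_of_card_le fun σ hσ => le_sup (f := card) hσ⟩

end Collapsibility

section Cone
variable [DecidableEq V] {A L L' : Finset (Finset V)} {u : V} {d : ℕ}

theorem ElemCollapse.subset (h : ElemCollapse d L L') : L' ⊆ L := by
  obtain ⟨_, _, _, _, rfl⟩ := h
  exact filter_subset _ _

theorem ElemCollapse.union_image_insert (hA : ∀ η ∈ A, u ∉ η) (hL : ∀ μ ∈ L, u ∉ μ)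
    (h : ElemCollapse d L L') :
    ElemCollapse (d + 1) (A ∪ L.image (insert u)) (A ∪ L'.image (insert u)) := by
  obtain ⟨σ, τ, ⟨hσ, hτ, hστ, hmax⟩, hcard, rfl⟩ := h
  have huσ := hL σ hσ
  refine ⟨insert u σ, insert u τ, ⟨mem_union_right _ (mem_image_of_mem _ hσ),
    mem_union_right _ (mem_image_of_mem _ hτ), insert_subset_insert _ hστ, ?_⟩,
    by simpa [card_insert_of_notMem huσ], ?_⟩
  · intro η hη hση
    rcases mem_union.1 hη with hηA | hηL
    · exact absurd (hση (mem_insert_self u σ)) (hA η hηA)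
    · obtain ⟨μ, hμ, rfl⟩ := mem_image.1 hηL
      exact insert_subset_insert _ (hmax μ hμ ((insert_subset_insert_iff huσ).1 hση))
  · have hA_fixed : A.filter (fun η => ¬(insert u σ ⊆ η ∧ η ⊆ insert u τ)) = A :=
      filter_true_of_mem fun η hη h => hA η hη (h.1 (mem_insert_self u σ))
    rw [filter_union, hA_fixed, filter_image]
    congr 2
    exact filter_congr fun μ hμ => by
      rw [insert_subset_insert_iff huσ, insert_subset_insert_iff (hL μ hμ)]

theorem Collapsible.union_image_insert (hA : ∀ η ∈ A, u ∉ η) (hL : ∀ μ ∈ L, u ∉ μ)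
    (h : Collapsible d L) :
    Relation.ReflTransGen (ElemCollapse (d + 1)) (A ∪ L.image (insert u)) A := by
  induction h using Relation.ReflTransGen.head_induction_on with
  | refl => simpa using .refl
  | head hstep _ ih =>
    exact .head (hstep.union_image_insert hA hL) (ih fun μ hμ => hL μ (hstep.subset hμ))

end Cone

section Link
variable [DecidableEq V] {X : Finset (Finset V)} {u : V}

theorem mem_link_singleton {μ : Finset V} :
    μ ∈ link X {u} ↔ μ ∈ X ∧ u ∉ μ ∧ insert u μ ∈ X := by
  simp [link, ← disjoint_iff_inter_eq_empty]

theorem deleteVert_union_image_insert_link (hX : IsSimplicialComplex X) :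
    deleteVert X u ∪ (link X {u}).image (insert u) = X := by
  ext η
  simp only [mem_union, mem_image, deleteVert, mem_filter, mem_link_singleton]
  constructor
  · rintro (⟨hη, -⟩ | ⟨μ, ⟨-, -, hμ⟩, rfl⟩) <;> assumption
  · intro hη
    by_cases hu : u ∈ η
    · exact .inr ⟨η.erase u, ⟨hX η hη _ (erase_subset u η), notMem_erase u η,
        (insert_erase hu).symm ▸ hη⟩, insert_erase hu⟩
    · exact .inl ⟨hη, hu⟩

theorem collapsible_of_link_of_deleteVert (hX : IsSimplicialComplex X) {d : ℕ}
    (hlk : Collapsible d (link X {u})) (hdel : Collapsible (d + 1) (deleteVert X u)) :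
    Collapsible (d + 1) X := by
  have hfaces : ∀ μ ∈ link X {u}, u ∉ μ := fun μ hμ => (mem_link_singleton.1 hμ).2.1
  have hcone := hlk.union_image_insert (A := deleteVert X u)
    (fun η hη => (mem_filter.1 hη).2) hfaces
  rw [deleteVert_union_image_insert_link hX] at hcone
  exact hcone.trans hdel

end Link

section PrefixFace
variable [DecidableEq V] {k : ℕ} (v : Fin k → V)

def prefixFace (i : ℕ) : Finset V :=
  (univ.filter fun j : Fin k => (j : ℕ) < i).image v

theorem prefixFace_zero : prefixFace v 0 = ∅ := by
  simp [prefixFace]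

theorem prefixFace_of_le {i : ℕ} (hi : k ≤ i) : prefixFace v i = univ.image v := by
  rw [prefixFace, filter_true_of_mem fun j _ => j.2.trans_le hi]

theorem prefixFace_succ (i : Fin k) : prefixFace v (i + 1) = prefixFace v i ∪ {v i} := by
  ext x
  simp [prefixFace, le_iff_lt_or_eq, or_and_right, exists_or, Fin.val_inj, eq_comm (a := x),
    or_comm]

variable {v}

theorem notMem_prefixFace (hv : Function.Injective v) (i : Fin k) : v i ∉ prefixFace v i := by
  simp [prefixFace, hv.eq_iff]

end PrefixFace

theorem collapsible_link_prefixFace [DecidableEq V] {X : Finset (Finset V)}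
    (hX : IsSimplicialComplex X) {k d : ℕ} (hkd : k ≤ d) {v : Fin k → V}
    (hv : Function.Injective v)
    (hdel : ∀ i : Fin k, Collapsible (d - i) (link (deleteVert X (v i)) (prefixFace v i)))
    (hlink : Collapsible (d - k) (link X (univ.image v))) {i : ℕ} (hi : i ≤ k) :
    Collapsible (d - i) (link X (prefixFace v i)) := by
  induction hi using Nat.decreasingInduction with
  | self => rwa [prefixFace_of_le v le_rfl]
  | of_succ i hik ih =>
    let j : Fin k := ⟨i, hik⟩
    have hdi : d - i = d - (i + 1) + 1 := by omega
    rw [hdi]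
    apply collapsible_of_link_of_deleteVert (hX.link _) (u := v j)
    · rwa [link_link hX (disjoint_singleton_right.2 (notMem_prefixFace hv j)), ← prefixFace_succ]
    · rw [deleteVert_link (notMem_prefixFace hv j), ← hdi]
      exact hdel j

theorem collapseNum_le_of_link_bounds_general {V : Type*} [DecidableEq V]
    (X : Finset (Finset V)) (hX : IsSimplicialComplex X)
    (k d : ℕ) (hkd : k ≤ d) (v : Fin k → V) (hv : Function.Injective v)
    (h1 : ∀ i : Fin k,
      collapseNum (link (deleteVert X (v i))
        ((Finset.univ.filter (fun j : Fin k => (j : ℕ) < (i : ℕ))).image v))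
        ≤ d - (i : ℕ))
    (h2 : collapseNum (link X (Finset.image v Finset.univ)) ≤ d - k) :
    collapseNum X ≤ d := by
  have hX_prefix := collapsible_link_prefixFace hX hkd hv (fun i => collapseNum_le_iff.1 (h1 i))
    (collapseNum_le_iff.1 h2) (Nat.zero_le k)
  rwa [prefixFace_zero, link_empty, Nat.sub_zero, ← collapseNum_le_iff] at hX_prefix

/-- Let `σ = {v 0, …, v (k-1)} ∈ X` with the `v i` distinct, and
`σ_i = {v j : j < i}`. Let `d ≥ k`. If `C(lk(X \ v i, σ_i)) ≤ d - i` for all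
`0 ≤ i ≤ k - 1` and `C(lk(X, σ_k)) ≤ d - k`, then `C(X) ≤ d`. -/
theorem collapseNum_le_of_link_bounds {V : Type*} [DecidableEq V]
    (X : Finset (Finset V)) (hX : IsSimplicialComplex X)
    (k d : ℕ) (hkd : k ≤ d) (v : Fin k → V) (hv : Function.Injective v)
    (hσ : Finset.image v Finset.univ ∈ X)
    (h1 : ∀ i : Fin k,
      collapseNum (link (deleteVert X (v i))
        ((Finset.univ.filter (fun j : Fin k => (j : ℕ) < (i : ℕ))).image v))
        ≤ d - (i : ℕ))
    (h2 : collapseNum (link X (Finset.image v Finset.univ)) ≤ d - k) :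
    collapseNum X ≤ d :=
  collapseNum_le_of_link_bounds_general X hX k d hkd v hv h1 h2

end PaperKL
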